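/- arXiv:1102.1093 — 5 statements merged into one kernel-verified Lean document; each statement's English description precedes it below -/
import Mathlib

section
/- Let C be a rational plane curve of degree d with a point of multiplicity m, and let (a,b) with a ≤ b be its splitting type. Then min(m, d−m) ≤ a ≤ min(d−m, ⌊d/2⌋). In particular, if d ≤ 2m then (a,b) = (d−m, m), and if d = 2m+1 then (a,b) = (m, m+1). -/
/-!
Substituting `φ₁ = ℓ₁ φ₀ + q h` and `φ₂ = ℓ₂ φ₀ + q g` turns a syzygy `(α₀, α₁, α₂)` of degree `k`
into `β φ₀ + q (α₁ h + α₂ g) = 0` with `β = α₀ + ℓ₁ α₁ + ℓ₂ α₂`. Since `q` is coprime to `φ₀` and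
`g` to `h`, the forms `β` and `α₁` are divisible by `q` and `g`, of degrees `m` and `d - m`; so
every syzygy of degree `k < min m (d - m)` vanishes. On the other hand `(ℓ₂ h - ℓ₁ g, g, -h)` is a
nonzero syzygy of degree `d - m`. As the first nonzero syzygies of splitting type `(a, b)` live in
degree `a`, this gives `min m (d - m) ≤ a ≤ d - m`, and `a ≤ d / 2` is `a ≤ b`.

That `q` and `φ₀` are coprime is also read off the splitting type: if `φ = r ψ` with `r` of degree
`e ≥ 1`, the syzygies of `φ` and `ψ` agree, and rank–nullity in degree `b` produces `e` syzygies
more than the `b - a + 2` allowed.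
-/

/- A rational plane curve is given parametrically by three homogeneous forms
φ_0, φ_1, φ_2 ∈ K[s,t]_d.  By Grothendieck splitting, φ*Ω_{P²}(1) ≅ O(−a)⊕O(−b);
pulling back the Euler sequence identifies the graded module ⊕_k H⁰(φ*Ω(1)(k+d))
with the module of syzygies of (φ_0,φ_1,φ_2).  Thus "(a,b) is the splitting type"
is faithfully encoded by: for every k, the space of degree-k syzygies has
dimension max(0,k+1−a) + max(0,k+1−b), which says precisely that the syzygy
module is S(−a) ⊕ S(−b). -/

noncomputable section

open MvPolynomial

variable (K : Type) [Field K]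

/-- The linear map `(α₀,α₁,α₂) ↦ α₀φ₀ + α₁φ₁ + α₂φ₂`. -/
def sigmaMap (φ : Fin 3 → MvPolynomial (Fin 2) K) :
    (Fin 3 → MvPolynomial (Fin 2) K) →ₗ[K] MvPolynomial (Fin 2) K :=
  ∑ i : Fin 3, (LinearMap.mulRight K (φ i)).comp (LinearMap.proj i)

/-- The space of syzygies of `φ` in degree `k`: triples of homogeneous forms of
degree `k` with `α₀φ₀ + α₁φ₁ + α₂φ₂ = 0`. -/
def syz (φ : Fin 3 → MvPolynomial (Fin 2) K) (k : ℕ) :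
    Submodule K (Fin 3 → MvPolynomial (Fin 2) K) :=
  (⨅ i : Fin 3, (homogeneousSubmodule (Fin 2) K k).comap (LinearMap.proj i)) ⊓
    LinearMap.ker (sigmaMap K φ)

/-- `(a,b)` is the splitting type of the curve parameterized by `φ`, i.e.
`φ*Ω_{P²}(1) ≅ O(−a) ⊕ O(−b)`: the graded syzygy module of `φ` is
`S(−a) ⊕ S(−b)`, recorded dimensionwise. -/
def IsSplittingType (φ : Fin 3 → MvPolynomial (Fin 2) K) (a b : ℕ) : Prop :=
  ∀ k : ℕ, (Module.finrank K (syz K φ k) : ℤ) =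
    max 0 ((k : ℤ) + 1 - a) + max 0 ((k : ℤ) + 1 - b)

/-- `φ` is a parameterization of a degree-`d` plane curve: the `φ_i` are forms of
degree `d` and the kernel of `K[x₀,x₁,x₂] → K[s,t]` is generated by an
irreducible form of degree `d` (the implicit equation; its degree being `d`
encodes that `φ` is generically injective onto its image). -/
def ParamOfDegree (d : ℕ) (φ : Fin 3 → MvPolynomial (Fin 2) K) : Prop :=
  (∀ i, (φ i).IsHomogeneous d) ∧
  ∃ F : MvPolynomial (Fin 3) K, F.IsHomogeneous d ∧ Irreducible F ∧
    RingHom.ker (MvPolynomial.aeval φ : MvPolynomial (Fin 3) K →ₐ[K] _).toRingHom =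
      Ideal.span {F}


/-- The curve parameterized by `φ` has a point `p = [1, ℓ₁, ℓ₂]` of multiplicity
`m`: after subtracting `ℓ_i φ₀` the remaining two coordinates have greatest
common factor `q` of degree exactly `m` (so `h, g` have no common factor). -/
def HasPointOfMultiplicity (d m : ℕ) (φ : Fin 3 → MvPolynomial (Fin 2) K) : Prop :=
  ∃ (ℓ₁ ℓ₂ : K) (q h g : MvPolynomial (Fin 2) K),
    q.IsHomogeneous m ∧ h.IsHomogeneous (d - m) ∧ g.IsHomogeneous (d - m) ∧
    φ 1 = MvPolynomial.C ℓ₁ * φ 0 + q * h ∧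
    φ 2 = MvPolynomial.C ℓ₂ * φ 0 + q * g ∧
    (∀ r : MvPolynomial (Fin 2) K, r ∣ h → r ∣ g → IsUnit r)

namespace MvPolynomial

variable {σ R F : Type*}

instance [CommSemiring R] [Finite σ] (n : ℕ) : Module.Finite R (homogeneousSubmodule σ R n) :=
  Module.Finite.iff_fg.mpr (homogeneousSubmodule_fg σ R n)

theorem finrank_homogeneousSubmodule [CommRing R] [Nontrivial R] [Fintype σ] [DecidableEq σ]
    (n : ℕ) :
    Module.finrank R (homogeneousSubmodule σ R n) = (Fintype.card σ + n - 1).choose n := by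
  have hset : {d : σ →₀ ℕ | d.degree = n} =
      ↑(Finset.univ.finsuppAntidiag n : Finset (σ →₀ ℕ)) := by
    ext d
    simp [Finsupp.degree_eq_sum]
  rw [homogeneousSubmodule_eq_finsupp_supported, ← restrictSupport,
    Module.finrank_eq_nat_card_basis (basisRestrictSupport R _), hset, Nat.card_coe_set_eq,
    Set.ncard_coe_finset, Finset.card_finsuppAntidiag_nat_eq_choose, Finset.card_univ]

theorem finrank_homogeneousSubmodule_fin_two [CommRing R] [Nontrivial R] (n : ℕ) :
    Module.finrank R (homogeneousSubmodule (Fin 2) R n) = n + 1 := by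
  rw [finrank_homogeneousSubmodule, Fintype.card_fin, show 2 + n - 1 = n + 1 by omega,
    Nat.choose_succ_self_right]

theorem homogeneousComponent_totalDegree_ne_zero [CommSemiring R] {p : MvPolynomial σ R}
    (hp : p ≠ 0) : homogeneousComponent p.totalDegree p ≠ 0 := by
  obtain ⟨u, hu, hdeg⟩ := p.support.exists_mem_eq_sup (support_nonempty.mpr hp)
    fun s => s.sum fun _ e => e
  intro h
  have hc := coeff_homogeneousComponent (φ := p) p.totalDegree u
  rw [h, coeff_zero, if_pos (by exact hdeg.symm)] at hc
  exact mem_support_iff.mp hu hc.symm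

theorem IsHomogeneous.degree_eq_zero_of_isUnit [CommRing R] [IsDomain R] {p : MvPolynomial σ R}
    {n : ℕ} (hp : p.IsHomogeneous n) (hu : IsUnit p) : n = 0 := by
  rw [← hp.totalDegree hu.ne_zero]
  exact (isUnit_iff_totalDegree_of_isReduced.mp hu).2

theorem IsHomogeneous.eq_zero_of_dvd [CommRing R] [IsDomain R] {p f : MvPolynomial σ R}
    {m k : ℕ} (hp : p.IsHomogeneous m) (hp0 : p ≠ 0) (hf : f.IsHomogeneous k) (hk : k < m)
    (h : p ∣ f) : f = 0 := by
  by_contra hf0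
  have hle := totalDegree_le_of_dvd_of_isDomain h hf0
  rw [hp.totalDegree hp0] at hle
  have := hf.totalDegree_le
  omega

theorem isUnit_of_totalDegree_eq_zero [Field F] {p : MvPolynomial σ F} (hp : p ≠ 0)
    (h : p.totalDegree = 0) : IsUnit p := by
  refine isUnit_iff_totalDegree_of_isReduced.mpr ⟨isUnit_iff_ne_zero.mpr fun h0 => hp ?_, h⟩
  rw [totalDegree_eq_zero_iff_eq_C.mp h, h0, map_zero]

theorem totalDegree_add_totalDegree_eq_of_isHomogeneous_mul [CommRing R] [IsDomain R]
    {r w : MvPolynomial σ R} {n : ℕ} (hr : r ≠ 0) (hw : w ≠ 0) (h : (r * w).IsHomogeneous n) :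
    r.totalDegree + w.totalDegree = n := by
  rw [← totalDegree_mul_of_isDomain hr hw]
  exact h.totalDegree (mul_ne_zero hr hw)

theorem finrank_le_of_forall_mul_mem_homogeneousSubmodule [Field F] [Finite σ]
    {r : MvPolynomial σ F} (hr : r ≠ 0) {n : ℕ} (V : Submodule F (MvPolynomial σ F))
    (hV : ∀ w ∈ V, r * w ∈ homogeneousSubmodule σ F n) :
    Module.finrank F V ≤ Module.finrank F (homogeneousSubmodule σ F (n - r.totalDegree)) := by
  have hdeg : ∀ w ∈ V, w ≠ 0 → w.totalDegree = n - r.totalDegree := fun w hw hw0 => by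
    have := totalDegree_add_totalDegree_eq_of_isHomogeneous_mul hr hw0 (hV w hw)
    omega
  let top : V →ₗ[F] homogeneousSubmodule σ F (n - r.totalDegree) :=
    ((homogeneousComponent _).comp V.subtype).codRestrict _ fun _ => homogeneousComponent_mem _ _
  refine LinearMap.finrank_le_finrank_of_injective (f := top) ?_
  rw [← LinearMap.ker_eq_bot, Submodule.eq_bot_iff]
  rintro ⟨w, hw⟩ hker
  by_contra hw0
  have hw0' : w ≠ 0 := fun h => hw0 (Subtype.ext h)
  refine homogeneousComponent_totalDegree_ne_zero hw0' ?_
  rw [hdeg w hw hw0']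
  exact congrArg Subtype.val hker

theorem eq_zero_of_mul_add_mul_eq_zero_of_isRelPrime [Field F] {h g α β : MvPolynomial σ F}
    {n k : ℕ} (hhg : IsRelPrime h g) (hh : h.IsHomogeneous n) (hg : g.IsHomogeneous n)
    (hα : α.IsHomogeneous k) (hk : k < n) (hsum : α * h + β * g = 0) : α = 0 ∧ β = 0 := by
  have hg0 : g ≠ 0 := by
    rintro rfl
    have := hh.degree_eq_zero_of_isUnit (hhg dvd_rfl (dvd_zero h))
    omega
  have hα0 : α = 0 :=
    hg.eq_zero_of_dvd hg0 hα hk (hhg.symm.dvd_of_dvd_mul_right ⟨-β, by linear_combination hsum⟩)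
  refine ⟨hα0, ?_⟩
  rw [hα0, zero_mul, zero_add] at hsum
  exact (mul_eq_zero.mp hsum).resolve_right hg0

end MvPolynomial

section Syzygies

variable {K}

theorem sigmaMap_apply (φ α : Fin 3 → MvPolynomial (Fin 2) K) :
    sigmaMap K φ α = ∑ i, α i * φ i := by
  simp [sigmaMap, LinearMap.sum_apply]

variable (K) in
def formTriples (k : ℕ) : Submodule K (Fin 3 → MvPolynomial (Fin 2) K) :=
  Submodule.pi Set.univ fun _ => homogeneousSubmodule (Fin 2) K k

theorem syz_eq_formTriples_inf_ker (φ : Fin 3 → MvPolynomial (Fin 2) K) (k : ℕ) :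
    syz K φ k = formTriples K k ⊓ LinearMap.ker (sigmaMap K φ) := by
  rw [syz, Submodule.iInf_comap_proj, formTriples]

theorem mem_syz {φ α : Fin 3 → MvPolynomial (Fin 2) K} {k : ℕ} :
    α ∈ syz K φ k ↔ (∀ i, (α i).IsHomogeneous k) ∧ ∑ i, α i * φ i = 0 := by
  simp [syz_eq_formTriples_inf_ker, formTriples, sigmaMap_apply, mem_homogeneousSubmodule]

theorem finrank_formTriples (k : ℕ) : Module.finrank K (formTriples K k) = 3 * (k + 1) := by
  let ι := (homogeneousSubmodule (Fin 2) K k).subtype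
  have hrange : LinearMap.range (ι.compLeft (Fin 3)) = formTriples K k := by
    rw [LinearMap.range_compLeft, Submodule.range_subtype, formTriples]
  rw [← hrange, LinearMap.finrank_range_of_inj (Subtype.val_injective.comp_left),
    Module.finrank_pi_fintype, finrank_homogeneousSubmodule_fin_two]
  simp

instance (k : ℕ) : FiniteDimensional K (formTriples K k) :=
  Module.finite_of_finrank_eq_succ (finrank_formTriples k)

instance (φ : Fin 3 → MvPolynomial (Fin 2) K) (k : ℕ) : FiniteDimensional K (syz K φ k) :=
  Submodule.finiteDimensional_of_le (syz_eq_formTriples_inf_ker φ k ▸ inf_le_left)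

theorem finrank_syz_add_finrank_map (φ : Fin 3 → MvPolynomial (Fin 2) K) (k : ℕ) :
    Module.finrank K (syz K φ k) + Module.finrank K ((formTriples K k).map (sigmaMap K φ)) =
      3 * (k + 1) := by
  have hker : LinearMap.ker ((sigmaMap K φ).comp (formTriples K k).subtype) =
      (syz K φ k).comap (formTriples K k).subtype := by
    ext ⟨α, hα⟩
    simp [syz_eq_formTriples_inf_ker]
  have hrn := LinearMap.finrank_range_add_finrank_ker ((sigmaMap K φ).comp (formTriples K k).subtype)
  rw [LinearMap.range_comp, Submodule.range_subtype, hker,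
    (Submodule.comapSubtypeEquivOfLe (syz_eq_formTriples_inf_ker φ k ▸ inf_le_left)).finrank_eq,
    finrank_formTriples] at hrn
  omega

theorem syz_eq_of_forall_eq_mul {φ ψ : Fin 3 → MvPolynomial (Fin 2) K}
    {r : MvPolynomial (Fin 2) K} (hr : r ≠ 0) (h : ∀ i, φ i = r * ψ i) (k : ℕ) :
    syz K φ k = syz K ψ k := by
  ext α
  have hsum : ∑ i, α i * φ i = r * ∑ i, α i * ψ i := by
    rw [Finset.mul_sum]
    exact Finset.sum_congr rfl fun i _ => by rw [h i]; ring
  simp only [mem_syz, hsum, mul_eq_zero, hr, false_or]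

end Syzygies

namespace IsSplittingType

variable {K} {φ : Fin 3 → MvPolynomial (Fin 2) K} {a b : ℕ}

theorem syz_ne_bot (hsplit : IsSplittingType K φ a b) : syz K φ a ≠ ⊥ := by
  intro hbot
  have := hsplit a
  rw [hbot, finrank_bot] at this
  omega

theorem syz_eq_bot_of_lt (hsplit : IsSplittingType K φ a b) (hab : a ≤ b) {k : ℕ}
    (hk : k < a) : syz K φ k = ⊥ := by
  have := hsplit k
  exact Submodule.finrank_eq_zero.mp (by omega)

theorem totalDegree_eq_zero_of_forall_dvd (hφ : ∀ i, (φ i).IsHomogeneous (a + b))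
    (hsplit : IsSplittingType K φ a b) (hab : a ≤ b) {r : MvPolynomial (Fin 2) K} (hr : r ≠ 0)
    (hdvd : ∀ i, r ∣ φ i) : r.totalDegree = 0 := by
  choose ψ hψ using hdvd
  have hV : ∀ w ∈ (formTriples K b).map (sigmaMap K ψ),
      r * w ∈ homogeneousSubmodule (Fin 2) K (b + (a + b)) := by
    rintro _ ⟨α, hα, rfl⟩
    have hsum : r * sigmaMap K ψ α = ∑ i, α i * φ i := by
      rw [sigmaMap_apply, Finset.mul_sum]
      exact Finset.sum_congr rfl fun i _ => by rw [hψ i]; ring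
    rw [hsum, mem_homogeneousSubmodule]
    exact IsHomogeneous.sum _ _ _ fun i _ => (hα i trivial).mul (hφ i)
  have hle := finrank_le_of_forall_mul_mem_homogeneousSubmodule hr _ hV
  rw [finrank_homogeneousSubmodule_fin_two] at hle
  have hs := hsplit b
  rw [syz_eq_of_forall_eq_mul hr hψ] at hs
  have hrank := finrank_syz_add_finrank_map ψ b
  have hpos : 0 < Module.finrank K ((formTriples K b).map (sigmaMap K ψ)) := by omega
  obtain ⟨w, hw, hw0⟩ := Submodule.exists_mem_ne_zero_of_ne_bot
    (Submodule.one_le_finrank_iff.mp hpos)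
  have hdeg := totalDegree_add_totalDegree_eq_of_isHomogeneous_mul hr hw0 (hV w hw)
  -- the image has dimension `a + 2b + 1` but embeds into the forms of degree `a + 2b - e`
  omega

theorem isUnit_of_forall_dvd (hφ : ∀ i, (φ i).IsHomogeneous (a + b))
    (hsplit : IsSplittingType K φ a b) (hab : a ≤ b) {r : MvPolynomial (Fin 2) K}
    (hdvd : ∀ i, r ∣ φ i) : IsUnit r := by
  rcases eq_or_ne r 0 with rfl | hr
  · have hX := hsplit.totalDegree_eq_zero_of_forall_dvd hφ hab (X_ne_zero 0)
      fun i => (zero_dvd_iff.mp (hdvd i)).symm ▸ dvd_zero _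
    rw [totalDegree_X] at hX
    exact absurd hX one_ne_zero
  · exact isUnit_of_totalDegree_eq_zero hr (hsplit.totalDegree_eq_zero_of_forall_dvd hφ hab hr hdvd)

end IsSplittingType

namespace HasPointOfMultiplicity

variable {K} {φ : Fin 3 → MvPolynomial (Fin 2) K} {d m : ℕ}

theorem syz_ne_bot (hmult : HasPointOfMultiplicity K d m φ) : syz K φ (d - m) ≠ ⊥ := by
  obtain ⟨ℓ₁, ℓ₂, q, h, g, -, hh, hg, hφ1, hφ2, hhg⟩ := hmult
  refine (Submodule.ne_bot_iff _).mpr ⟨![C ℓ₂ * h - C ℓ₁ * g, g, -h], mem_syz.mpr ⟨?_, ?_⟩, ?_⟩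
  · intro i
    fin_cases i
    exacts [(hh.C_mul ℓ₂).sub (hg.C_mul ℓ₁), hg, hh.neg]
  · simp only [Fin.sum_univ_three, Matrix.cons_val_zero, Matrix.cons_val_one,
      Matrix.cons_val_two, Matrix.head_cons, Matrix.tail_cons, hφ1, hφ2]
    ring
  · intro h0
    have hg0 : g = 0 := by simpa using congrFun h0 1
    have hh0 : h = 0 := by simpa using congrFun h0 2
    exact not_isRelPrime_zero_zero (hh0 ▸ hg0 ▸ hhg)

theorem syz_eq_bot_of_lt (hmult : HasPointOfMultiplicity K d m φ)
    (hφ0 : (φ 0).IsHomogeneous d) (hcop : ∀ r, (∀ i, r ∣ φ i) → IsUnit r) {k : ℕ}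
    (hkm : k < m) (hkd : k < d - m) : syz K φ k = ⊥ := by
  obtain ⟨ℓ₁, ℓ₂, q, h, g, hq, hh, hg, hφ1, hφ2, hhg⟩ := hmult
  have hq0 : q ≠ 0 := by
    rintro rfl
    have hunit : IsUnit (φ 0) := hcop _ fun i => by
      fin_cases i <;> simp [hφ1, hφ2]
    have := hφ0.degree_eq_zero_of_isUnit hunit
    omega
  have hqφ0 : IsRelPrime q (φ 0) := fun r hrq hrφ0 => hcop r fun i => by
    fin_cases i
    exacts [hrφ0, hφ1 ▸ dvd_add (hrφ0.mul_left _) (hrq.mul_right _),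
      hφ2 ▸ dvd_add (hrφ0.mul_left _) (hrq.mul_right _)]
  rw [Submodule.eq_bot_iff]
  intro α hα
  obtain ⟨hαk, hαφ⟩ := mem_syz.mp hα
  rw [Fin.sum_univ_three, hφ1, hφ2] at hαφ
  set β := α 0 + C ℓ₁ * α 1 + C ℓ₂ * α 2 with hβdef
  have hβk : β.IsHomogeneous k := ((hαk 0).add ((hαk 1).C_mul ℓ₁)).add ((hαk 2).C_mul ℓ₂)
  have hrel : β * φ 0 + q * (α 1 * h + α 2 * g) = 0 := by linear_combination hαφ
  have hβ0 : β = 0 := hq.eq_zero_of_dvd hq0 hβk hkm <|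
    hqφ0.dvd_of_dvd_mul_right ⟨-(α 1 * h + α 2 * g), by linear_combination hrel⟩
  rw [hβ0, zero_mul, zero_add, mul_eq_zero] at hrel
  obtain ⟨hα1, hα2⟩ :=
    eq_zero_of_mul_add_mul_eq_zero_of_isRelPrime hhg hh hg (hαk 1) hkd (hrel.resolve_left hq0)
  have hα0 : α 0 = 0 := by simpa [hβdef, hα1, hα2] using hβ0
  funext i
  fin_cases i
  exacts [hα0, hα1, hα2]

end HasPointOfMultiplicity

theorem ascenzi_bounds (d m : ℕ) (hmd : m ≤ d)
    (φ : Fin 3 → MvPolynomial (Fin 2) K) (hφ : ParamOfDegree K d φ)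
    (hmult : HasPointOfMultiplicity K d m φ)
    (a b : ℕ) (hab : a ≤ b) (hsum : a + b = d)
    (hsplit : IsSplittingType K φ a b) :
    (min m (d - m) ≤ a ∧ a ≤ min (d - m) (d / 2)) ∧
    (d ≤ 2 * m → a = d - m ∧ b = m) ∧
    (d = 2 * m + 1 → a = m ∧ b = m + 1) := by
  subst hsum
  have hupper : a ≤ a + b - m := by
    by_contra! h
    exact hmult.syz_ne_bot (hsplit.syz_eq_bot_of_lt hab h)
  have hlower : min m (a + b - m) ≤ a := by
    by_contra! h
    rw [lt_min_iff] at h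
    exact hsplit.syz_ne_bot <| hmult.syz_eq_bot_of_lt (hφ.1 0)
      (fun _ => hsplit.isUnit_of_forall_dvd hφ.1 hab) h.1 h.2
  omega
end
end

section
/- Let X → P^2 be the blow up at r = 9 distinct points, with basis L, E_1, …, E_9 of Cl(X) and K_X = −3L + E_1 + ⋯ + E_9. A class E ∈ Cl(X) satisfies E^2 = E·K_X = −1 if and only if E = v + (v^2/2)K_X + E_9 for a (unique) element v ∈ Cl(X) with v·K_X = v·E_9 = 0. -/
/- The divisor class group of the blow up of P^2 at 9 points is Z^10 with
orthogonal basis L, E_1, ..., E_9; coordinates: x 0 is the L-coefficient,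
x i.succ (for i : Fin 9) is the E_{i+1}-coefficient. -/

/-- Intersection form: `L^2 = 1`, `E_i^2 = -1`, basis pairwise orthogonal. -/
def inter9 (x y : Fin 10 → ℤ) : ℤ := x 0 * y 0 - ∑ i : Fin 9, x i.succ * y i.succ

/-- The canonical class `K_X = -3L + E_1 + ⋯ + E_9`. -/
def K9 : Fin 10 → ℤ := fun j => if j = 0 then -3 else 1

/-- The class of the exceptional divisor `E_i` (for `i : Fin 9`). -/
def Ei9 (i : Fin 9) : Fin 10 → ℤ := fun j => if j = i.succ then 1 else 0

/-!
Write `E = v + m K + F` with `F = E_9`. Since `F² = K·F = -1`, pairing with `F` gives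
`E·F = -m - 1` when `v·F = 0`, so `v` is determined by `E`; and since `K² = 0`, for
`v ∈ K^⊥ ∩ F^⊥` one gets `E·K = -1` and `E² = v² - 2m - 1`, which is `-1` exactly when
`m = v²/2`. This is an integer because `K` is characteristic: every coordinate of `K` is odd, so
`x² ≡ x·K (mod 2)`.
-/

open LinearMap (BilinForm)

namespace LinearMap.BilinForm

variable {M : Type*} [AddCommGroup M]

def IsExceptionalClass (B : BilinForm ℤ M) (K E : M) : Prop :=
  B E E = -1 ∧ B E K = -1

variable {B : BilinForm ℤ M} {K F : M}

theorem isExceptionalClass_add_smul_add (hB : B.IsSymm) (hKK : B K K = 0) (hKF : B K F = -1)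
    (hFF : B F F = -1) {v : M} (hvK : B v K = 0) (hvF : B v F = 0) {m : ℤ}
    (hm : B v v = 2 * m) :
    IsExceptionalClass B K (v + m • K + F) := by
  have hFK : B F K = -1 := hB.eq F K ▸ hKF
  simp only [IsExceptionalClass, map_add, map_smul, LinearMap.add_apply, LinearMap.smul_apply,
    smul_eq_mul, hB.eq K v, hB.eq F v, hKK, hFK, hKF, hFF, hvK, hvF, hm]
  constructor <;> ring

theorem eq_sub_of_eq_add_smul_add (hKF : B K F = -1) (hFF : B F F = -1) {w E : M}
    (hwF : B w F = 0) {m : ℤ} (hE : E = w + m • K + F) :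
    w = E - (-B E F - 1) • K - F := by
  have hm : B E F = -m - 1 := by
    simp only [hE, map_add, map_smul, LinearMap.add_apply, LinearMap.smul_apply, smul_eq_mul,
      hwF, hKF, hFF]
    ring
  rw [hm, hE]
  module

theorem IsExceptionalClass.exists_eq_add_smul_add (hB : B.IsSymm) (hKK : B K K = 0)
    (hKF : B K F = -1) (hFF : B F F = -1) {E : M} (hE : IsExceptionalClass B K E) :
    ∃ v, B v K = 0 ∧ B v F = 0 ∧ E = v + (B v v / 2) • K + F := by
  obtain ⟨hEE, hEK⟩ := hE
  set n := -B E F - 1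
  have hFK : B F K = -1 := hB.eq F K ▸ hKF
  have hEF : B E F = -n - 1 := by ring
  have hvv : B (E - n • K - F) (E - n • K - F) = 2 * n := by
    simp only [map_sub, map_smul, LinearMap.sub_apply, LinearMap.smul_apply, smul_eq_mul,
      hB.eq K E, hB.eq F E, hEE, hEK, hEF, hKK, hKF, hFK, hFF]
    ring
  refine ⟨E - n • K - F, ?_, ?_, ?_⟩
  · simp only [map_sub, map_smul, LinearMap.sub_apply, LinearMap.smul_apply, smul_eq_mul,
      hEK, hKK, hFK]
    ring
  · simp only [map_sub, map_smul, LinearMap.sub_apply, LinearMap.smul_apply, smul_eq_mul,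
      hEF, hKF, hFF]
    ring
  · rw [hvv, Int.mul_ediv_cancel_left _ two_ne_zero]
    abel

theorem isExceptionalClass_iff_existsUnique (hB : B.IsSymm) (hKK : B K K = 0)
    (hKF : B K F = -1) (hFF : B F F = -1) (hK : ∀ v, Even (B v v + B v K)) (E : M) :
    IsExceptionalClass B K E ↔
      ∃! v, B v K = 0 ∧ B v F = 0 ∧ E = v + (B v v / 2) • K + F := by
  constructor
  · intro hE
    obtain ⟨v, hvK, hvF, hEv⟩ := hE.exists_eq_add_smul_add hB hKK hKF hFF
    refine ⟨v, ⟨hvK, hvF, hEv⟩, fun w ⟨_, hwF, hEw⟩ => ?_⟩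
    rw [eq_sub_of_eq_add_smul_add hKF hFF hwF hEw, ← eq_sub_of_eq_add_smul_add hKF hFF hvF hEv]
  · rintro ⟨v, ⟨hvK, hvF, rfl⟩, -⟩
    obtain ⟨m, hm⟩ := hK v
    have hvv : B v v = 2 * m := by omega
    rw [hvv, Int.mul_ediv_cancel_left _ two_ne_zero]
    exact isExceptionalClass_add_smul_add hB hKK hKF hFF hvK hvF hvv

end LinearMap.BilinForm

def inter9Form : BilinForm ℤ (Fin 10 → ℤ) :=
  LinearMap.mk₂ ℤ inter9
    (fun x y z => by simp only [inter9, Pi.add_apply, add_mul, Finset.sum_add_distrib]; ring)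
    (fun c x y => by
      simp only [inter9, Pi.smul_apply, smul_eq_mul, mul_sub, Finset.mul_sum, mul_assoc])
    (fun x y z => by simp only [inter9, Pi.add_apply, mul_add, Finset.sum_add_distrib]; ring)
    (fun c x y => by
      simp only [inter9, Pi.smul_apply, smul_eq_mul, mul_sub, Finset.mul_sum, mul_left_comm _ c])

theorem inter9Form_isSymm : inter9Form.IsSymm :=
  ⟨fun x y => by simp only [inter9Form, LinearMap.mk₂_apply, inter9, mul_comm]⟩

theorem inter9_K9_K9 : inter9 K9 K9 = 0 := by decide

theorem inter9_K9_Ei9 (i : Fin 9) : inter9 K9 (Ei9 i) = -1 := by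
  revert i
  decide

theorem inter9_Ei9_self (i : Fin 9) : inter9 (Ei9 i) (Ei9 i) = -1 := by
  revert i
  decide

theorem even_inter9_add_inter9_K9 (v : Fin 10 → ℤ) : Even (inter9 v v + inter9 v K9) := by
  have h : inter9 v v + inter9 v K9 =
      v 0 * (v 0 - 3) - ∑ i : Fin 9, v i.succ * (v i.succ + 1) := by
    simp only [inter9, K9, Fin.succ_ne_zero, if_true, if_false, mul_add, Finset.sum_add_distrib]
    ring
  rw [h]
  refine Even.sub ?_ (Finset.even_sum _ fun i _ => Int.even_mul_succ_self _)
  simp only [Int.even_mul, Int.even_sub]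
  tauto

/-- A class `E` satisfies `E^2 = E·K_X = −1` if and only if
`E = v + (v^2/2)K_X + E_9` for a unique `v` with `v·K_X = v·E_9 = 0`. -/
theorem numerical_exceptional_classes (E : Fin 10 → ℤ) :
    (inter9 E E = -1 ∧ inter9 E K9 = -1) ↔
    ∃! v : Fin 10 → ℤ, inter9 v K9 = 0 ∧ inter9 v (Ei9 8) = 0 ∧
      E = v + (inter9 v v / 2) • K9 + Ei9 8 :=
  inter9Form.isExceptionalClass_iff_existsUnique inter9Form_isSymm inter9_K9_K9
    (inter9_K9_Ei9 8) (inter9_Ei9_self 8) even_inter9_add_inter9_K9 E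
end

section
/- Let X be the blow up of P^2 at 9 points, and fix an integer j. Then there are only finitely many classes E = d·L − m_1 E_1 − ⋯ − m_9 E_9 ∈ Cl(X) with d ≥ 0, E^2 = E·K_X = −1, and d − 2·max_i(m_i) ≤ j. Moreover, any such class satisfies d ≤ 3j + ⌊4√(4j+8)⌋ + 10. -/
/-- `max_i m_i` for the class `E = dL − m_1E_1 − ⋯ − m_9E_9`. -/
def maxm (E : Fin 10 → ℤ) : ℤ :=
  Finset.univ.sup' Finset.univ_nonempty (fun i : Fin 9 => inter9 E (Ei9 i))


/-!
Write `E = dL − Σ mᵢEᵢ`. The conditions `E² = E·K = −1` say `Σ mᵢ² = d² + 1` and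
`Σ mᵢ = 3d − 1`. Cauchy–Schwarz applied to the eight multiplicities other than the largest
one, `M`, gives `(3d − 1 − M)² ≤ 8 (d² + 1 − M²)`, a quadratic inequality in `M` whose
solution is `9M ≤ 3d − 1 + 4√(3d + 4)`. Together with `d − j ≤ 2M` this is a quadratic
inequality in `√(3d + 4)`, which yields `d ≤ 3j + 8√(j + 2) + 10`. Since also every
`mᵢ² ≤ d² + 1`, all coordinates of `E` are bounded, so there are finitely many such `E`.
-/

open Finset

lemma sq_sum_sub_le_card_sub_one_mul {ι R : Type*} [CommRing R] [LinearOrder R]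
    [IsStrictOrderedRing R] [DecidableEq ι] (s : Finset ι) (f : ι → R) {a : ι} (ha : a ∈ s) :
    (∑ i ∈ s, f i - f a) ^ 2 ≤ (#s - 1) * (∑ i ∈ s, f i ^ 2 - f a ^ 2) := by
  have h := sq_sum_le_card_mul_sum_sq (s := s.erase a) (f := f)
  rwa [sum_erase_eq_sub ha, sum_erase_eq_sub ha, card_erase_of_mem ha,
    Nat.cast_sub (card_pos.mpr ⟨a, ha⟩), Nat.cast_one] at h

lemma inter9_self (E : Fin 10 → ℤ) : inter9 E E = E 0 ^ 2 - ∑ i : Fin 9, E i.succ ^ 2 := by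
  simp only [inter9, sq]

lemma inter9_K9 (E : Fin 10 → ℤ) : inter9 E K9 = -3 * E 0 - ∑ i : Fin 9, E i.succ := by
  simp [inter9, K9, mul_comm]

lemma inter9_Ei9 (E : Fin 10 → ℤ) (i : Fin 9) : inter9 E (Ei9 i) = -E i.succ := by
  simp [inter9, Ei9, (Fin.succ_ne_zero i).symm]

lemma maxm_eq_sup' (E : Fin 10 → ℤ) :
    maxm E = univ.sup' univ_nonempty (fun i : Fin 9 => -E i.succ) := by
  simp only [maxm, inter9_Ei9]

lemma sq_le_of_inter9_self (E : Fin 10 → ℤ) (hEE : inter9 E E = -1) (i : Fin 9) :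
    E i.succ ^ 2 ≤ E 0 ^ 2 + 1 := by
  have hle := single_le_sum (fun k _ => sq_nonneg (E (Fin.succ k))) (mem_univ i)
  rw [inter9_self] at hEE
  linarith

lemma abs_le_of_inter9_self (E : Fin 10 → ℤ) (hd : 0 ≤ E 0) (hEE : inter9 E E = -1)
    (k : Fin 10) : |E k| ≤ E 0 + 1 := by
  rcases Fin.eq_zero_or_eq_succ k with rfl | ⟨i, rfl⟩
  · rw [abs_of_nonneg hd]
    linarith
  · apply abs_le_of_sq_le_sq _ (by linarith)
    linarith [sq_le_of_inter9_self E hEE i]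

lemma sq_sub_maxm_le (E : Fin 10 → ℤ) (hEE : inter9 E E = -1) (hEK : inter9 E K9 = -1) :
    (3 * E 0 - 1 - maxm E) ^ 2 ≤ 8 * (E 0 ^ 2 + 1 - maxm E ^ 2) := by
  obtain ⟨i₀, -, hi₀⟩ := exists_mem_eq_sup' univ_nonempty (fun i : Fin 9 => -E i.succ)
  have hcs := sq_sum_sub_le_card_sub_one_mul univ (fun i : Fin 9 => -E i.succ) (mem_univ i₀)
  have hsum : ∑ i : Fin 9, E i.succ = 1 - 3 * E 0 := by rw [inter9_K9] at hEK; linarith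
  have hsumsq : ∑ i : Fin 9, E i.succ ^ 2 = E 0 ^ 2 + 1 := by rw [inter9_self] at hEE; linarith
  simp only [sum_neg_distrib, neg_sq, card_univ, Fintype.card_fin, hsum, hsumsq] at hcs
  rw [maxm_eq_sup', hi₀]
  norm_num at hcs
  linarith

lemma nine_mul_le_of_sq_sub_le {D M : ℝ} (hD : 0 ≤ D)
    (h : (3 * D - 1 - M) ^ 2 ≤ 8 * (D ^ 2 + 1 - M ^ 2)) :
    9 * M ≤ 3 * D - 1 + 4 * √(3 * D + 4) := by
  have hs := Real.sq_sqrt (show 0 ≤ 3 * D + 4 by linarith)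
  -- `h` is `(9M − (3D − 1))² ≤ 16 (3D + 4)` after multiplying by 9 and completing the square.
  have hsq : (9 * M - (3 * D - 1)) ^ 2 ≤ (4 * √(3 * D + 4)) ^ 2 := by nlinarith
  linarith [abs_le_of_sq_le_sq' hsq (by positivity)]

lemma le_of_nine_mul_le {D M J : ℝ} (hD : 0 ≤ D) (hM : 9 * M ≤ 3 * D - 1 + 4 * √(3 * D + 4))
    (hJ : D - J ≤ 2 * M) : D ≤ 3 * J + 8 * √(J + 2) + 10 := by
  set s := √(3 * D + 4)
  have hs : s ^ 2 = 3 * D + 4 := Real.sq_sqrt (by linarith)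
  have hsq : (s - 4) ^ 2 ≤ 9 * (J + 2) := by nlinarith
  have hr : √(J + 2) ^ 2 = J + 2 := Real.sq_sqrt (by nlinarith [sq_nonneg (s - 4)])
  have hs4 : s - 4 ≤ 3 * √(J + 2) :=
    (abs_le_of_sq_le_sq' (by rw [mul_pow, hr]; linarith) (by positivity)).2
  nlinarith

lemma le_of_sub_two_mul_maxm_le (E : Fin 10 → ℤ) (j : ℤ) (hd : 0 ≤ E 0)
    (hEE : inter9 E E = -1) (hEK : inter9 E K9 = -1) (hj : E 0 - 2 * maxm E ≤ j) :
    E 0 ≤ 3 * j + ⌊4 * √(4 * (j : ℝ) + 8)⌋ + 10 := by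
  have hcs : (3 * (E 0 : ℝ) - 1 - maxm E) ^ 2 ≤ 8 * ((E 0 : ℝ) ^ 2 + 1 - (maxm E : ℝ) ^ 2) :=
    mod_cast sq_sub_maxm_le E hEE hEK
  have hj' : (E 0 : ℝ) - j ≤ 2 * maxm E := mod_cast (by linarith : E 0 - j ≤ 2 * maxm E)
  have hbound :=
    le_of_nine_mul_le (by positivity) (nine_mul_le_of_sq_sub_le (by positivity) hcs) hj'
  have hsqrt : 4 * √(4 * (j : ℝ) + 8) = 8 * √((j : ℝ) + 2) := by
    rw [show 4 * (j : ℝ) + 8 = 2 ^ 2 * (j + 2) by ring, Real.sqrt_mul (by positivity),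
      Real.sqrt_sq (by norm_num)]
    ring
  have hfloor : E 0 - 3 * j - 10 ≤ ⌊4 * √(4 * (j : ℝ) + 8)⌋ := by
    rw [Int.le_floor, hsqrt]
    push_cast
    linarith
  linarith

/-- for fixed `j` there are only finitely many classes
`E = dL − Σ m_iE_i` with `d ≥ 0`, `E² = E·K = −1` and `d − 2 max m_i ≤ j`, and
each satisfies `d ≤ 3j + ⌊4√(4j+8)⌋ + 10`. -/
theorem finitely_many_low_classes (j : ℤ) :
    {E : Fin 10 → ℤ | 0 ≤ E 0 ∧ inter9 E E = -1 ∧ inter9 E K9 = -1 ∧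
        E 0 - 2 * maxm E ≤ j}.Finite ∧
    ∀ E : Fin 10 → ℤ, 0 ≤ E 0 → inter9 E E = -1 → inter9 E K9 = -1 →
      E 0 - 2 * maxm E ≤ j →
      E 0 ≤ 3 * j + ⌊4 * Real.sqrt (4 * (j : ℝ) + 8)⌋ + 10 := by
  refine ⟨?_, fun E => le_of_sub_two_mul_maxm_le E j⟩
  set B := 3 * j + ⌊4 * Real.sqrt (4 * (j : ℝ) + 8)⌋ + 10
  refine (Set.finite_Icc (fun _ : Fin 10 => -(B + 1)) (fun _ => B + 1)).subset ?_
  rintro E ⟨hd, hEE, hEK, hj⟩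
  have hdB := le_of_sub_two_mul_maxm_le E j hd hEE hEK hj
  have hE k := abs_le.mp (abs_le_of_inter9_self E hd hEE k)
  exact ⟨fun k => by linarith [hE k], fun k => by linarith [hE k]⟩
end

section
/- Let X be the blow up of P^2 at 9 points. The only class E = dL − m_1E_1 − ⋯ − m_9E_9 with d ≥ 0, E^2 = E·K_X = −1 and d − 2m_1 ≤ −2 (where m_1 = max_i m_i) is, up to permutation of the E_i, E = 4L − 3E_1 − E_2 − ⋯ − E_9. -/
/-!
Write `m_i = E·E_i`. The conditions `E·K = -1` and `E² = -1` say `∑ m_i = 3d - 1` and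
`∑ m_i² = d² + 1`. Cauchy–Schwarz for the eight multiplicities other than `M = m_1` gives
`(3d - 1 - M)² ≤ 8 (d² + 1 - M²)`, and with `t = 2M - d - 2 ≥ 0`,
`(d - 4)² = 4 ((3d - 1 - M)² - 8 (d² + 1 - M²)) - t (6d + 40 + 9t) ≤ 0`.
Hence `d = 4`, then `M = 3`, and the remaining eight multiplicities have sum and sum of
squares both equal to `8`, so they are all `1`.
-/

open Finset

lemma sum_inter9_Ei9 (E : Fin 10 → ℤ) : ∑ i, inter9 E (Ei9 i) = inter9 E K9 + 3 * E 0 := by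
  simp only [inter9_Ei9, sum_neg_distrib]
  simp [inter9, K9, Fin.succ_ne_zero]
  ring

lemma sum_inter9_Ei9_sq (E : Fin 10 → ℤ) :
    ∑ i, inter9 E (Ei9 i) ^ 2 = E 0 ^ 2 - inter9 E E := by
  simp only [inter9_Ei9, neg_sq]
  simp only [inter9, sq]
  ring

lemma exists_inter9_Ei9_eq_maxm (E : Fin 10 → ℤ) : ∃ i, inter9 E (Ei9 i) = maxm E := by
  obtain ⟨i, -, hi⟩ := exists_mem_eq_sup' univ_nonempty fun i : Fin 9 => inter9 E (Ei9 i)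
  exact ⟨i, hi.symm⟩

lemma eq_one_of_sum_eq_card_of_sum_sq_eq_card {ι R : Type*} [CommRing R] [LinearOrder R]
    [IsStrictOrderedRing R] {s : Finset ι} {f : ι → R}
    (hsum : ∑ i ∈ s, f i = #s) (hsq : ∑ i ∈ s, f i ^ 2 = #s) : ∀ i ∈ s, f i = 1 := by
  have hdev : ∑ i ∈ s, (f i - 1) ^ 2 = 0 := by
    simp only [sub_sq, one_pow, mul_one, sum_add_distrib, sum_sub_distrib, ← mul_sum, hsum,
      hsq, sum_const, nsmul_one]
    ring
  intro i hi
  have := (sum_eq_zero_iff_of_nonneg fun j _ => sq_nonneg (f j - 1)).mp hdev i hi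
  exact sub_eq_zero.mp (pow_eq_zero_iff two_ne_zero |>.mp this)

lemma eq_four_and_eq_three_of_sq_le {d M : ℤ} (hd : 0 ≤ d) (hM : d + 2 ≤ 2 * M)
    (hCS : (3 * d - 1 - M) ^ 2 ≤ 8 * (d ^ 2 + 1 - M ^ 2)) : d = 4 ∧ M = 3 := by
  have hd4 : d = 4 := by
    have ht : 0 ≤ (2 * M - d - 2) * (6 * d + 40 + 9 * (2 * M - d - 2)) :=
      mul_nonneg (by linarith) (by linarith)
    nlinarith [sq_nonneg (d - 4)]
  subst hd4
  have : (M - 3) * (9 * M + 5) ≤ 0 := by nlinarith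
  exact ⟨rfl, by nlinarith⟩

lemma multiplicities_eq_of_unbalanced {m : Fin 9 → ℤ} {d : ℤ} {i₀ : Fin 9} (hd : 0 ≤ d)
    (hsum : ∑ i, m i = 3 * d - 1) (hsq : ∑ i, m i ^ 2 = d ^ 2 + 1) (hM : d + 2 ≤ 2 * m i₀) :
    d = 4 ∧ m i₀ = 3 ∧ ∀ i ≠ i₀, m i = 1 := by
  have hcard : #(univ.erase i₀) = 8 := by simp [card_erase_of_mem]
  have hrest : ∑ i ∈ univ.erase i₀, m i = 3 * d - 1 - m i₀ := by
    rw [← add_sum_erase _ _ (mem_univ i₀)] at hsum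
    linarith
  have hrest_sq : ∑ i ∈ univ.erase i₀, m i ^ 2 = d ^ 2 + 1 - m i₀ ^ 2 := by
    rw [← add_sum_erase _ (fun i => m i ^ 2) (mem_univ i₀)] at hsq
    linarith
  have hCS := sq_sum_le_card_mul_sum_sq (s := univ.erase i₀) (f := m)
  rw [hrest, hrest_sq, hcard] at hCS
  obtain ⟨rfl, hM3⟩ := eq_four_and_eq_three_of_sq_le hd hM (by exact_mod_cast hCS)
  refine ⟨rfl, hM3, fun i hi => ?_⟩
  refine eq_one_of_sum_eq_card_of_sum_sq_eq_card (s := univ.erase i₀) ?_ ?_ i (by simp [hi])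
  · rw [hrest, hcard, hM3]; norm_num
  · rw [hrest_sq, hcard, hM3]; norm_num

/-- the only class with `d ≥ 0`, `E² = E·K = −1` and
`d − 2·max m_i ≤ −2` is, up to permutation of the `E_i`,
`E = 4L − 3E_1 − E_2 − ⋯ − E_9`. -/
theorem unique_unbalanced_ascenzi_class (E : Fin 10 → ℤ)
    (hd : 0 ≤ E 0) (hself : inter9 E E = -1) (hK : inter9 E K9 = -1)
    (hmax : E 0 - 2 * maxm E ≤ -2) :
    E 0 = 4 ∧ ∃ i0 : Fin 9, inter9 E (Ei9 i0) = 3 ∧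
      ∀ i : Fin 9, i ≠ i0 → inter9 E (Ei9 i) = 1 := by
  obtain ⟨i₀, hi₀⟩ := exists_inter9_Ei9_eq_maxm E
  have hsum := sum_inter9_Ei9 E
  have hsq := sum_inter9_Ei9_sq E
  rw [hK] at hsum
  rw [hself] at hsq
  obtain ⟨hd4, hm₀, hm⟩ := multiplicities_eq_of_unbalanced (m := fun i => inter9 E (Ei9 i)) (i₀ := i₀)
    hd (by linarith) (by linarith) (by linarith)
  exact ⟨hd4, i₀, hm₀, hm⟩
end

section
/- Let W be the Weyl group of the 7-point blow up X of P^2, acting on Cl(X) ≅ Z^8, generated by the reflections s_v(D) = D + (v·D)v for v ∈ {L−E_1−E_2−E_3, E_1−E_2, …, E_6−E_7}. If D ∈ Cl(X) is nef with D^2 = −2 − D·K_X (numerically a smooth rational curve class) and is a non-negative integer combination of H_0 = L, H_1 = L−E_1, H_2 = 2L−E_1−E_2, H_i = 3L−E_1−⋯−E_i (3 ≤ i ≤ 7), then D is one of: H_0 + dH_1, H_2 + dH_1 (d ≥ 0), 2H_0, or H_1. -/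
/- Cl(X) ≅ Z^8 for the blow up X of P^2 at 7 points: coordinate 0 is the
L-coefficient, coordinate i.succ (i : Fin 7) the E_{i+1}-coefficient. -/

def inter8 (x y : Fin 8 → ℤ) : ℤ := x 0 * y 0 - ∑ i : Fin 7, x i.succ * y i.succ

def K8 : Fin 8 → ℤ := fun j => if j = 0 then -3 else 1

/-- The classes `H_0 = L`, `H_1 = L − E_1`, `H_2 = 2L − E_1 − E_2`,
`H_i = 3L − E_1 − ⋯ − E_i` for `3 ≤ i ≤ 7`. -/
def H7 (j : Fin 8) : Fin 8 → ℤ := fun k =>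
  if k = 0 then (if (j : ℕ) ≤ 1 then 1 else if (j : ℕ) = 2 then 2 else 3)
  else (if (k : ℕ) ≤ (j : ℕ) then -1 else 0)

/-- Numerical nefness: nonnegative intersection with every numerical
exceptional class (for 7 generic points the effective cone is generated by
the exceptional curves, whose classes are the `E` with `E² = E·K = −1`). -/
def NumNef8 (D : Fin 8 → ℤ) : Prop :=
  ∀ E : Fin 8 → ℤ, inter8 E E = -1 ∧ inter8 E K8 = -1 → 0 ≤ inter8 D E

/-!
Write `D = ∑ cⱼ Hⱼ` with `cⱼ ≥ 0`. The `Hⱼ` meet each other nonnegatively, so `D·Hⱼ ≥ 0`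
for all `j` and `D² = ∑ cⱼ (D·Hⱼ) ≥ D·Hⱼ` whenever `cⱼ > 0`. Since `−K = H₇` and
`Hᵢ·Hⱼ ≥ Hᵢ·H₇` for `j ≥ 3`, such a `j` would give `D² ≥ −D·K = D² + 2`. Hence
`D = c₀H₀ + c₁H₁ + c₂H₂`, and `D² + D·K = −2` becomes a quadratic equation in `c₀, c₁, c₂`
whose nonnegative solutions are the listed classes.
-/

theorem LinearMap.BilinForm.coeff_eq_zero_of_apply_self_lt {ι M : Type*} [Fintype ι]
    [AddCommGroup M] (B : LinearMap.BilinForm ℤ M) (H : ι → M) (c : ι → ℕ) {F : M} {j : ι}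
    (hH : ∀ i k, 0 ≤ B (H i) (H k)) (hF : ∀ i, B (H i) F ≤ B (H i) (H j))
    (hlt : B (∑ i, (c i : ℤ) • H i) (∑ i, (c i : ℤ) • H i) <
      B (∑ i, (c i : ℤ) • H i) F) :
    c j = 0 := by
  set D := ∑ i, (c i : ℤ) • H i
  have hD : ∀ x, B D x = ∑ i, c i * B (H i) x := fun x => by simp [D]
  have hDH : ∀ k, 0 ≤ B D (H k) := fun k => by
    rw [hD]; exact Finset.sum_nonneg fun i _ => mul_nonneg (by positivity) (hH i k)
  have hDD : B D D = ∑ k, c k * B D (H k) := by simp [D]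
  have hDF : B D F ≤ B D (H j) := by
    rw [hD, hD]; gcongr with i; exact hF i
  by_contra hne
  have : B D (H j) ≤ B D D := calc
    B D (H j) ≤ c j * B D (H j) := le_mul_of_one_le_left (hDH j) (by omega)
    _ ≤ B D D := hDD ▸ Finset.single_le_sum (f := fun k => (c k : ℤ) * B D (H k))
        (fun k _ => mul_nonneg (by positivity) (hDH k)) (Finset.mem_univ j)
  linarith

lemma nonneg_solutions_of_rational_eq {a b c : ℤ} (ha : 0 ≤ a) (hb : 0 ≤ b) (hc : 0 ≤ c)
    (h : a ^ 2 + 2 * a * b + 4 * a * c + 2 * b * c + 2 * c ^ 2 + 2 = 3 * a + 2 * b + 4 * c) :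
    (a = 1 ∧ c = 0) ∨ (a = 0 ∧ c = 1) ∨ (a = 2 ∧ b = 0 ∧ c = 0) ∨
      (a = 0 ∧ b = 1 ∧ c = 0) := by
  rcases ha.eq_or_lt with rfl | ha
  · have : 2 * ((c - 1) * (c + b - 1)) = 0 := by linear_combination h
    rcases mul_eq_zero.mp ((mul_eq_zero.mp this).resolve_left two_ne_zero) with h' | h' <;>
      omega
  rcases hc.eq_or_lt with rfl | hc
  · have : (a - 1) * (a + 2 * b - 2) = 0 := by linear_combination h
    rcases mul_eq_zero.mp this with h' | h' <;> omega
  have hu : 0 ≤ a - 1 := by omega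
  have hv : 0 ≤ c - 1 := by omega
  -- in `u = a - 1`, `v = c - 1` the difference of the two sides is
  -- `u² + 2v² + 4uv + 3u + 4v + 2b(u + v + 1) + 2 > 0`
  nlinarith [mul_nonneg hu hv, mul_nonneg hu hu, mul_nonneg hv hv, mul_nonneg hb hu,
    mul_nonneg hb hv]

def inter8Form : LinearMap.BilinForm ℤ (Fin 8 → ℤ) :=
  LinearMap.mk₂ ℤ inter8
    (fun x x' y => by simp only [inter8, Pi.add_apply, add_mul, Finset.sum_add_distrib]; ring)
    (fun a x y => by
      simp only [inter8, Pi.smul_apply, smul_eq_mul, mul_assoc, ← Finset.mul_sum]; ring)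
    (fun x y y' => by simp only [inter8, Pi.add_apply, mul_add, Finset.sum_add_distrib]; ring)
    (fun a x y => by
      simp only [inter8, Pi.smul_apply, smul_eq_mul, mul_left_comm _ a, ← Finset.mul_sum]; ring)

@[simp] lemma inter8Form_apply (x y : Fin 8 → ℤ) : inter8Form x y = inter8 x y := rfl

lemma K8_eq_neg_H7_seven : K8 = -H7 7 := by decide

lemma inter8_H7_nonneg : ∀ i j, 0 ≤ inter8 (H7 i) (H7 j) := by decide

lemma inter8_H7_seven_le :
    ∀ i j : Fin 8, 3 ≤ j → inter8 (H7 i) (H7 7) ≤ inter8 (H7 i) (H7 j) := by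
  decide

lemma inter8_self_add_inter8_K8_of_eq {D : Fin 8 → ℤ} {a b c : ℤ}
    (hD : D = a • H7 0 + b • H7 1 + c • H7 2) :
    inter8 D D + inter8 D K8 =
      a ^ 2 + 2 * a * b + 4 * a * c + 2 * b * c + 2 * c ^ 2 - (3 * a + 2 * b + 4 * c) := by
  subst hD
  simp [inter8, Fin.sum_univ_seven, H7, K8]
  ring

theorem seven_point_rational_nef_classes_general (D : Fin 8 → ℤ)
    (hcomb : ∃ c : Fin 8 → ℕ, D = ∑ j : Fin 8, (c j : ℤ) • H7 j)
    (hrat : inter8 D D = -2 - inter8 D K8) :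
    (∃ d : ℕ, D = H7 0 + (d : ℤ) • H7 1) ∨
    (∃ d : ℕ, D = H7 2 + (d : ℤ) • H7 1) ∨
    D = (2 : ℤ) • H7 0 ∨ D = H7 1 := by
  obtain ⟨c, hc⟩ := hcomb
  have hK : inter8 D K8 = -inter8 D (H7 7) := by
    rw [K8_eq_neg_H7_seven, ← inter8Form_apply, map_neg, inter8Form_apply]
  have hvanish (j : Fin 8) (hj : 3 ≤ j) : c j = 0 := by
    refine inter8Form.coeff_eq_zero_of_apply_self_lt H7 c inter8_H7_nonneg
      (fun i => inter8_H7_seven_le i j hj) (F := H7 7) ?_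
    rw [← hc, inter8Form_apply, inter8Form_apply]
    linarith
  have hD : D = (c 0 : ℤ) • H7 0 + (c 1 : ℤ) • H7 1 + (c 2 : ℤ) • H7 2 := by
    simp [hc, Fin.sum_univ_eight, hvanish 3, hvanish 4, hvanish 5, hvanish 6, hvanish 7,
      add_assoc]
  rcases nonneg_solutions_of_rational_eq (a := c 0) (b := c 1) (c := c 2)
    (by positivity) (by positivity) (by positivity)
    (by linear_combination hrat - inter8_self_add_inter8_K8_of_eq hD) with
    ⟨h0, h2⟩ | ⟨h0, h2⟩ | ⟨h0, h1, h2⟩ | ⟨h0, h1, h2⟩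
  · exact Or.inl ⟨c 1, by simp [hD, h0, h2]⟩
  · exact Or.inr <| Or.inl ⟨c 1, by simp [hD, h0, h2, add_comm]⟩
  · exact Or.inr <| Or.inr <| Or.inl <| by simp [hD, h0, h1, h2]
  · exact Or.inr <| Or.inr <| Or.inr <| by simp [hD, h0, h1, h2]

/-- a nef class `D` with `D² = −2 − D·K_X` which is a non-negative
integer combination of `H_0, …, H_7` is one of `H_0 + dH_1`, `H_2 + dH_1`
(`d ≥ 0`), `2H_0`, or `H_1`. -/
theorem seven_point_rational_nef_classes (D : Fin 8 → ℤ)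
    (hcomb : ∃ c : Fin 8 → ℕ, D = ∑ j : Fin 8, (c j : ℤ) • H7 j)
    (hrat : inter8 D D = -2 - inter8 D K8)
    (hnef : NumNef8 D) :
    (∃ d : ℕ, D = H7 0 + (d : ℤ) • H7 1) ∨
    (∃ d : ℕ, D = H7 2 + (d : ℤ) • H7 1) ∨
    D = (2 : ℤ) • H7 0 ∨ D = H7 1 :=
  seven_point_rational_nef_classes_general D hcomb hrat
end
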